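/- Let (X_t)_{t∈ℕ} be as in the drift setting. Then for every t ≥ 0, almost surely E[e^{η X_{t+1}} | F_t] ≤ e^{ν + ηB} + ρ e^{η X_t}. -/

import Mathlib

/-!
Write `e^{η X_{t+1}} = e^{η X_t} e^{η Δ}` with `Δ = X_{t+1} - X_t` and pull the
`F_t`-measurable factor out of the conditional expectation. Comparing the exponential series
term by term gives `e^{η y} ≤ 1 + η y + η² c` for `|y| ≤ ν` and `0 ≤ η ≤ 1`, so on `{X_t > B}`
the drift yields `E[e^{η Δ} | F_t] ≤ 1 - η α + η² c ≤ ρ`; on `{X_t ≤ B}` it suffices that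
`e^{η Δ} ≤ e^ν` and `e^{η X_t} ≤ e^{η B}`.
-/

open MeasureTheory Real
open scoped Nat

theorem Real.hasSum_exp_sub_sub_one (x : ℝ) :
    HasSum (fun n : ℕ ↦ x ^ (n + 2) / (n + 2)!) (exp x - x - 1) := by
  have h := (hasSum_nat_add_iff' 2).2 (Real.exp_eq_exp_ℝ ▸ NormedSpace.expSeries_div_hasSum_exp x)
  simpa [Finset.sum_range_succ, sub_sub, add_comm] using h

theorem Real.exp_mul_sub_sub_one_le {η y ν : ℝ} (hη0 : 0 ≤ η) (hη1 : η ≤ 1) (hy : |y| ≤ ν) :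
    exp (η * y) - η * y - 1 ≤ η ^ 2 * (exp ν - ν - 1) := by
  refine hasSum_le (fun n ↦ ?_) (hasSum_exp_sub_sub_one (η * y))
    ((hasSum_exp_sub_sub_one ν).mul_left (η ^ 2))
  rw [← mul_div_assoc]
  gcongr
  calc (η * y) ^ (n + 2) ≤ |η * y| ^ (n + 2) := le_abs_self _ |>.trans (abs_pow _ _).le
    _ = η ^ (n + 2) * |y| ^ (n + 2) := by rw [abs_mul, abs_of_nonneg hη0, mul_pow]
    _ ≤ η ^ 2 * ν ^ (n + 2) :=
      mul_le_mul (pow_le_pow_of_le_one hη0 hη1 (by omega)) (pow_le_pow_left₀ (abs_nonneg y) hy _)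
        (by positivity) (by positivity)

theorem Real.exp_mul_mul_le_add {x z B K η ρ : ℝ} (hη : 0 ≤ η) (hK : 0 ≤ K) (hρ : 0 ≤ ρ)
    (hzK : z ≤ K) (hzρ : B < x → z ≤ ρ) :
    exp (η * x) * z ≤ K * exp (η * B) + ρ * exp (η * x) := by
  have hKB : 0 ≤ K * exp (η * B) := by positivity
  have hρx : 0 ≤ ρ * exp (η * x) := by positivity
  rcases le_or_gt x B with hxB | hBx
  · calc exp (η * x) * z ≤ exp (η * x) * K := by gcongr
      _ ≤ exp (η * B) * K := by gcongr
      _ ≤ K * exp (η * B) + ρ * exp (η * x) := by linarith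
  · calc exp (η * x) * z ≤ exp (η * x) * ρ := by gcongr; exact hzρ hBx
      _ ≤ K * exp (η * B) + ρ * exp (η * x) := by linarith

namespace MeasureTheory

variable {Ω : Type*} {m m₀ : MeasurableSpace Ω} {μ : Measure Ω} {Y : Ω → ℝ} {ν η : ℝ}

theorem integrable_exp_mul_of_abs_le [IsFiniteMeasure μ] (hY : AEStronglyMeasurable Y μ)
    (hYν : ∀ᵐ ω ∂μ, |Y ω| ≤ ν) : Integrable (fun ω ↦ exp (η * Y ω)) μ := by
  refine .of_bound (by fun_prop) (exp (|η| * ν)) ?_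
  filter_upwards [hYν] with ω hω
  rw [norm_eq_abs, abs_exp, exp_le_exp]
  calc η * Y ω ≤ |η * Y ω| := le_abs_self _
    _ ≤ |η| * ν := by rw [abs_mul]; gcongr

theorem condExp_exp_mul_le_exp [IsFiniteMeasure μ] (hm : m ≤ m₀)
    (hY : AEStronglyMeasurable Y μ) (hYν : ∀ᵐ ω ∂μ, |Y ω| ≤ ν) (hη : 0 ≤ η) :
    μ[fun ω ↦ exp (η * Y ω) | m] ≤ᵐ[μ] fun _ ↦ exp (η * ν) := by
  have h := condExp_mono (m := m) (integrable_exp_mul_of_abs_le hY hYν)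
    (integrable_const (exp (η * ν))) (by
      filter_upwards [hYν] with ω hω
      exact exp_le_exp.2 (by gcongr; exact (abs_le.1 hω).2))
  rwa [condExp_const hm] at h

theorem condExp_exp_mul_le [IsFiniteMeasure μ] (hm : m ≤ m₀)
    (hY : AEStronglyMeasurable Y μ) (hYν : ∀ᵐ ω ∂μ, |Y ω| ≤ ν) (hη0 : 0 ≤ η) (hη1 : η ≤ 1) :
    μ[fun ω ↦ exp (η * Y ω) | m] ≤ᵐ[μ]
      fun ω ↦ 1 + η ^ 2 * (exp ν - ν - 1) + η * μ[Y | m] ω := by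
  have hYint : Integrable Y μ := .of_bound hY ν (by simpa only [norm_eq_abs] using hYν)
  have hmono := condExp_mono (m := m) (integrable_exp_mul_of_abs_le hY hYν)
    ((integrable_const (1 + η ^ 2 * (exp ν - ν - 1))).add (hYint.smul η)) (by
      filter_upwards [hYν] with ω hω
      have := exp_mul_sub_sub_one_le hη0 hη1 hω
      simp only [Pi.add_apply, Pi.smul_apply, smul_eq_mul]
      linarith)
  filter_upwards [hmono, condExp_add (integrable_const _) (hYint.smul η) m,
    condExp_smul (μ := μ) η Y m] with ω hω hadd hsmul
  rw [hadd, Pi.add_apply, condExp_const hm, hsmul] at hω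
  exact hω

theorem condExp_exp_mul_eq_mul {Z W : Ω → ℝ} (hZ : Measurable[m] Z)
    (hW : Integrable (fun ω ↦ exp (η * W ω)) μ)
    (hWZ : Integrable (fun ω ↦ exp (η * (W ω - Z ω))) μ) :
    μ[fun ω ↦ exp (η * W ω) | m] =ᵐ[μ]
      fun ω ↦ exp (η * Z ω) * μ[fun ω ↦ exp (η * (W ω - Z ω)) | m] ω := by
  have hsplit : (fun ω ↦ exp (η * W ω)) =
      (fun ω ↦ exp (η * Z ω)) * fun ω ↦ exp (η * (W ω - Z ω)) := by
    ext ω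
    simp only [Pi.mul_apply, ← exp_add]
    ring_nf
  rw [hsplit] at hW ⊢
  exact condExp_mul_of_stronglyMeasurable_left
    (continuous_exp.comp_stronglyMeasurable (hZ.const_mul η).stronglyMeasurable) hW hWZ

end MeasureTheory

theorem stmt_6_general
    {Ω : Type*} {m : MeasurableSpace Ω} {μ : Measure Ω} [IsProbabilityMeasure μ]
    (ℱ : Filtration ℕ m)
    (X : ℕ → Ω → ℝ) (hXadapted : Adapted ℱ X)
    (ν α B η ρ : ℝ)
    (hν : 0 < ν)
    (hinc : ∀ t : ℕ, ∀ᵐ ω ∂μ, |X (t + 1) ω - X t ω| ≤ ν)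
    (hdrift : ∀ t : ℕ, ∀ᵐ ω ∂μ,
      X t ω > B → (μ[fun ω' => X (t + 1) ω' - X t ω' | ℱ t]) ω ≤ -α)
    (hη0 : 0 < η) (hη1 : η ≤ min 1 (α / (2 * (Real.exp ν - ν - 1))))
    (hρ : ρ = 1 - η * α / 2) (hρ0 : 0 < ρ) :
    ∀ t : ℕ, ∀ᵐ ω ∂μ,
      (μ[fun ω' => Real.exp (η * X (t + 1) ω') | ℱ t]) ω ≤
        Real.exp (ν + η * B) + ρ * Real.exp (η * X t ω) := by
  intro t
  have hc : 0 < exp ν - ν - 1 := by linarith [add_one_lt_exp hν.ne']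
  have hη1' : η ≤ 1 := hη1.trans (min_le_left _ _)
  have hηc : η ^ 2 * (exp ν - ν - 1) ≤ η * α / 2 := by
    have h := (le_div_iff₀ (by positivity)).1 (hη1.trans (min_le_right _ _))
    calc η ^ 2 * (exp ν - ν - 1) = η * (η * (2 * (exp ν - ν - 1))) / 2 := by ring
      _ ≤ η * α / 2 := by gcongr
  by_cases hint : Integrable (fun ω ↦ exp (η * X (t + 1) ω)) μ
  swap
  · rw [condExp_of_not_integrable hint]
    filter_upwards with ω
    exact add_nonneg (exp_pos _).le (mul_nonneg hρ0.le (exp_pos _).le)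
  have hXm (s : ℕ) : Measurable (X s) := (hXadapted s).mono (ℱ.le s) le_rfl
  have hY : AEStronglyMeasurable (fun ω ↦ X (t + 1) ω - X t ω) μ :=
    ((hXm (t + 1)).sub (hXm t)).aestronglyMeasurable
  filter_upwards [condExp_exp_mul_eq_mul (hXadapted t) hint
      (integrable_exp_mul_of_abs_le hY (hinc t)),
    condExp_exp_mul_le_exp (ℱ.le t) hY (hinc t) hη0.le,
    condExp_exp_mul_le (ℱ.le t) hY (hinc t) hη0.le hη1', hdrift t]
    with ω hpull hexp hquad hdriftω
  rw [hpull, exp_add]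
  refine exp_mul_mul_le_add hη0.le (exp_pos ν).le hρ0.le
    (hexp.trans (exp_le_exp.2 (mul_le_of_le_one_left hν.le hη1'))) fun hBX ↦ ?_
  have hdriftη := mul_le_mul_of_nonneg_left (hdriftω hBX) hη0.le
  rw [hρ]
  linarith

/-- One-step conditional exponential drift bound: for a process with bounded
increments and negative drift above level `B`, almost surely
`E[e^{η X_{t+1}} | F_t] ≤ e^{ν + ηB} + ρ e^{η X_t}`. -/
theorem stmt_6
    {Ω : Type*} {m : MeasurableSpace Ω} {μ : Measure Ω} [IsProbabilityMeasure μ]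
    (ℱ : Filtration ℕ m)
    (X : ℕ → Ω → ℝ) (hXadapted : Adapted ℱ X)
    (ν α B η ρ : ℝ)
    (hν : 0 < ν)
    (hinc : ∀ t : ℕ, ∀ᵐ ω ∂μ, |X (t + 1) ω - X t ω| ≤ ν)
    (hα : 0 < α) (hB : 0 < B)
    (hdrift : ∀ t : ℕ, ∀ᵐ ω ∂μ,
      X t ω > B → (μ[fun ω' => X (t + 1) ω' - X t ω' | ℱ t]) ω ≤ -α)
    (hη0 : 0 < η) (hη1 : η ≤ min 1 (α / (2 * (Real.exp ν - ν - 1))))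
    (hρ : ρ = 1 - η * α / 2) (hρ0 : 0 < ρ) (hρ1 : ρ < 1) :
    ∀ t : ℕ, ∀ᵐ ω ∂μ,
      (μ[fun ω' => Real.exp (η * X (t + 1) ω') | ℱ t]) ω ≤
        Real.exp (ν + η * B) + ρ * Real.exp (η * X t ω) :=
  stmt_6_general ℱ X hXadapted ν α B η ρ hν hinc hdrift hη0 hη1 hρ hρ0
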